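/- A preference vector (p_1,...,p_n) with 1 ≤ p_i ≤ n allows all n cars to park (each car i drives to space p_i and takes the first unoccupied space with index ≥ p_i, and all cars succeed) if and only if its weakly increasing sorted version (p_{(1)},...,p_{(n)}) satisfies p_{(i)} ≤ i for all 1 ≤ i ≤ n. -/

import Mathlib

/-- The weakly increasing sorted version of a vector of naturals. -/
def sortPF {n : ℕ} (p : Fin n → ℕ) : List ℕ :=
  Multiset.sort (↑(List.ofFn p)) (· ≤ ·)

/-- `p` is an `a`-parking function of length `n`: all entries are positive and the
`i`-th entry (0-based) of the sorted version is at most `a + i` (i.e. `a + i - 1` 1-based). -/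
def IsAPF (a : ℕ) {n : ℕ} (p : Fin n → ℕ) : Prop :=
  (∀ i, 1 ≤ p i) ∧ ∀ i : Fin n, (sortPF p).getD i 0 ≤ a + (i : ℕ)

/-- `p` is an ordinary parking function of length `n`. -/
def IsPF {n : ℕ} (p : Fin n → ℕ) : Prop :=
  (∀ i, 1 ≤ p i ∧ p i ≤ n) ∧ ∀ i : Fin n, (sortPF p).getD i 0 ≤ (i : ℕ) + 1

/-- The first unoccupied space `s` with `pref ≤ s ≤ n`, if any. -/
def firstFree (n : ℕ) (occ : Finset ℕ) (pref : ℕ) : Option ℕ :=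
  ((List.range' pref (n + 1 - pref)).filter (fun s => decide (s ∉ occ))).head?

/-- Process the cars in order; each parks at the first free space `≥` its preference.
Returns `true` iff every car parks successfully. -/
def parkAll (n : ℕ) : List ℕ → Finset ℕ → Bool
  | [], _ => true
  | pref :: rest, occ =>
    match firstFree n occ pref with
    | none => false
    | some s => parkAll n rest (insert s occ)

/-!
A car preferring `t` or more can only park in a free space of `[t, n]`, so parking from the
occupied set `occ` succeeds iff, for every `t`, at most `#([t, n] \ occ)` of the remaining cars
prefer a space `≥ t`. This condition is invariant under parking one car: a car preferring `q`
takes the first free space `s ≥ q`, and as `[q, s)` is full, `[t, n]` has as many free spaces as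
`[q, n]` for every `q ≤ t ≤ s`. On the empty street the condition reads
`#{i | t ≤ p i} ≤ n + 1 - t`, which for the sorted vector is equivalent to `p₍ᵢ₎ ≤ i`.
-/

open Finset

lemma firstFree_eq_none_iff {n q : ℕ} {occ : Finset ℕ} :
    firstFree n occ q = none ↔ Icc q n ⊆ occ := by
  simp only [firstFree, List.head?_filter, List.find?_range'_eq_none, subset_iff, mem_Icc]
  grind

lemma firstFree_eq_some_iff {n q s : ℕ} {occ : Finset ℕ} :
    firstFree n occ q = some s ↔ s ∉ occ ∧ s ∈ Icc q n ∧ Ico q s ⊆ occ := by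
  simp only [firstFree, List.head?_filter, List.find?_range'_eq_some, subset_iff, mem_Icc,
    mem_Ico, List.mem_range'_1]
  grind

lemma card_Icc_sdiff_insert {n s : ℕ} {occ : Finset ℕ} (hs : s ∉ occ) (hsn : s ≤ n) (t : ℕ) :
    #(Icc t n \ insert s occ) + (if t ≤ s then 1 else 0) = #(Icc t n \ occ) := by
  rw [sdiff_insert]
  split_ifs with hts
  · exact card_erase_add_one (by simp [*])
  · rw [erase_eq_of_notMem (by simp; omega), add_zero]

lemma card_Icc_sdiff_eq_of_Ico_subset {n q s t : ℕ} {occ : Finset ℕ} (hgap : Ico q s ⊆ occ)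
    (hqt : q ≤ t) (hts : t ≤ s) : #(Icc t n \ occ) = #(Icc q n \ occ) := by
  congr 1
  ext x
  have := @hgap x
  simp only [mem_sdiff, mem_Icc, mem_Ico] at *
  grind

lemma antitone_countP_le (l : List ℕ) : Antitone fun t => l.countP (t ≤ ·) :=
  fun _ _ hts => List.countP_mono_left fun x _ h => by simp only [decide_eq_true_eq] at *; omega

theorem parkAll_eq_true_iff (n : ℕ) (l : List ℕ) (occ : Finset ℕ) :
    parkAll n l occ = true ↔ ∀ t, l.countP (t ≤ ·) ≤ #(Icc t n \ occ) := by
  induction l generalizing occ with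
  | nil => simp [parkAll]
  | cons q rest ih =>
    rcases h : firstFree n occ q with _ | s
    · have hfull : #(Icc q n \ occ) = 0 := by
        simpa [sdiff_eq_empty_iff_subset] using firstFree_eq_none_iff.1 h
      simp only [parkAll, h, Bool.false_eq_true, false_iff, not_forall, not_le]
      exact ⟨q, by simp [hfull]⟩
    · obtain ⟨hs, hsIcc, hgap⟩ := firstFree_eq_some_iff.1 h
      rw [mem_Icc] at hsIcc
      have hfree := card_Icc_sdiff_insert hs hsIcc.2
      simp only [parkAll, h, ih, List.countP_cons, decide_eq_true_eq]
      constructor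
      · intro H t
        have := hfree t
        have := H t
        split_ifs at * <;> omega
      · intro H t
        suffices rest.countP (t ≤ ·) + (if t ≤ s then 1 else 0) ≤ #(Icc t n \ occ) by
          have := hfree t
          split_ifs at * <;> omega
        by_cases hqts : q < t ∧ t ≤ s
        · obtain ⟨hqt, hts⟩ := hqts
          have hmono : rest.countP (t ≤ ·) ≤ rest.countP (q ≤ ·) :=
            antitone_countP_le rest hqt.le
          have hq := H q
          rw [card_Icc_sdiff_eq_of_Ico_subset hgap hqt.le hts]
          simp only [le_refl, if_true, hts] at hq ⊢
          omega
        · have := H t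
          split_ifs at * <;> omega

lemma countP_le_of_getElem_le (l : List ℕ) (h : ∀ i (hi : i < l.length), l[i] ≤ i + 1)
    (t : ℕ) : l.countP (t ≤ ·) ≤ l.length + 1 - t := by
  have htake : (l.take (t - 1)).countP (t ≤ ·) = 0 := by
    rw [List.countP_eq_zero]
    intro x hx
    obtain ⟨j, hj, rfl⟩ := List.getElem_of_mem hx
    rw [List.length_take] at hj
    have := h j (by omega)
    simp only [List.getElem_take, decide_eq_true_eq, not_le]
    omega
  calc l.countP (t ≤ ·)
      = (l.take (t - 1)).countP (t ≤ ·) + (l.drop (t - 1)).countP (t ≤ ·) := by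
        rw [← List.countP_append, List.take_append_drop]
    _ ≤ (l.drop (t - 1)).length := by rw [htake, zero_add]; exact List.countP_le_length
    _ ≤ l.length + 1 - t := by rw [List.length_drop]; omega

lemma getElem_le_of_countP_le {l : List ℕ} (hl : l.Pairwise (· ≤ ·))
    (h : ∀ t, l.countP (t ≤ ·) ≤ l.length + 1 - t) (i : ℕ) (hi : i < l.length) :
    l[i] ≤ i + 1 := by
  by_contra! hlt
  have hdrop : (l.drop i).countP (i + 2 ≤ ·) = l.length - i := by
    rw [List.countP_eq_length.2, List.length_drop]
    have hsorted := hl.drop (i := i)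
    rw [List.drop_eq_getElem_cons hi, List.pairwise_cons] at hsorted
    rw [List.drop_eq_getElem_cons hi]
    intro x hx
    rcases List.mem_cons.1 hx with rfl | hx
    · simp only [decide_eq_true_eq]; omega
    · have := hsorted.1 x hx
      simp only [decide_eq_true_eq]; omega
  have := (List.drop_sublist i l).countP_le (p := (i + 2 ≤ ·))
  have := h (i + 2)
  omega

lemma countP_le_iff_getElem_le {l : List ℕ} (hl : l.Pairwise (· ≤ ·)) :
    (∀ t, l.countP (t ≤ ·) ≤ l.length + 1 - t) ↔ ∀ i (hi : i < l.length), l[i] ≤ i + 1 :=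
  ⟨getElem_le_of_countP_le hl, countP_le_of_getElem_le l⟩

theorem parking_succeeds_iff_sorted_le (n : ℕ) (p : Fin n → ℕ) :
    parkAll n (List.ofFn p) ∅ = true ↔
      ∀ i : Fin n, (sortPF p).getD i 0 ≤ (i : ℕ) + 1 := by
  have hperm : (sortPF p).Perm (List.ofFn p) := Multiset.coe_eq_coe.mp (Multiset.sort_eq _ _)
  have hlen : (sortPF p).length = n := by rw [hperm.length_eq, List.length_ofFn]
  calc parkAll n (List.ofFn p) ∅ = true
      ↔ ∀ t, (List.ofFn p).countP (t ≤ ·) ≤ n + 1 - t := by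
        simp only [parkAll_eq_true_iff, sdiff_empty, Nat.card_Icc]
    _ ↔ ∀ t, (sortPF p).countP (t ≤ ·) ≤ (sortPF p).length + 1 - t := by
        simp only [hperm.countP_eq, hlen]
    _ ↔ ∀ i (hi : i < (sortPF p).length), (sortPF p)[i] ≤ i + 1 :=
        countP_le_iff_getElem_le (Multiset.pairwise_sort _ _)
    _ ↔ ∀ i : Fin n, (sortPF p).getD i 0 ≤ (i : ℕ) + 1 := by
        have hi (i : Fin n) : (i : ℕ) < (sortPF p).length := hlen.symm ▸ i.isLt
        constructor
        · intro h i
          rw [List.getD_eq_getElem _ _ (hi i)]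
          exact h i (hi i)
        · intro h i hin
          simpa only [List.getD_eq_getElem _ _ hin] using h ⟨i, hlen ▸ hin⟩
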